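/- arXiv:1305.6979 — 4 statements merged into one kernel-verified Lean document; each statement's English description precedes it below -/
import Mathlib

section
/- For every D ≥ 1, M ≥ 1, p ∈ (0,1) and Y_M > 0 there is a constant C (depending only on D, M, p, Y_M) with the following property: for every graph G with n vertices and maximum degree at most D, every partition of its vertices into clusters of size at most M, cluster randomization with parameter p, any one of the exposure conditions full neighborhood, absolute k-neighborhood, or fractional q-neighborhood, and any response functions Y_i that are constant on each exposure event and bounded in absolute value by Y_M, the Horvitz–Thompson estimator satisfies Var[τ̂(Z)] ≤ C/n. -/
open Finset
open scoped Classical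

noncomputable section

/-- Probability weight of a coin vector of independent Bernoulli(p) cluster coins. -/
def coinWt (p : ℝ) {J : Type*} [Fintype J] (x : J → Bool) : ℝ :=
  ∏ j, if x j then p else 1 - p

/-- Probability of an event `A` of assignment vectors under cluster randomization
with cluster map `c` and parameter `p`. -/
def clusterPr {V : Type*} [Fintype V] {J : Type*} [Fintype J]
    (p : ℝ) (c : V → J) (A : Set (V → Bool)) : ℝ :=
  ∑ x : J → Bool, coinWt p x * (if (fun v => x (c v)) ∈ A then 1 else 0)

/-- The Horvitz–Thompson estimator for exposure events `σ1`, `σ0`,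
responses `Y`, probability functional `pr` and assignment `z`. -/
def htEst {V : Type*} [Fintype V] (pr : Set (V → Bool) → ℝ)
    (σ1 σ0 : V → Set (V → Bool)) (Y : V → (V → Bool) → ℝ) (z : V → Bool) : ℝ :=
  (Fintype.card V : ℝ)⁻¹ *
    ∑ i : V, ((if z ∈ σ1 i then Y i z else 0) / pr (σ1 i)
      - (if z ∈ σ0 i then Y i z else 0) / pr (σ0 i))

/-- Variance of the Horvitz–Thompson estimator under cluster randomization. -/
def clusterVar {V : Type*} [Fintype V] {J : Type*} [Fintype J]
    (p : ℝ) (c : V → J) (σ1 σ0 : V → Set (V → Bool)) (Y : V → (V → Bool) → ℝ) : ℝ :=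
  (∑ x : J → Bool, coinWt p x *
      (htEst (clusterPr p c) σ1 σ0 Y (fun v => x (c v))) ^ 2)
  - (∑ x : J → Bool, coinWt p x *
      htEst (clusterPr p c) σ1 σ0 Y (fun v => x (c v))) ^ 2

/-- Full neighborhood exposure to condition `b`: `v` and all its neighbors get `b`. -/
def fullExp {V : Type*} [Fintype V] (G : SimpleGraph V) (b : Bool) (v : V) :
    Set (V → Bool) :=
  {z | z v = b ∧ ∀ u ∈ G.neighborFinset v, z u = b}

/-- Absolute `k`-neighborhood exposure to condition `b`:
`v` and at least `min k (deg v)` of its neighbors get `b`. -/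
def absExp {V : Type*} [Fintype V] (G : SimpleGraph V) (k : ℕ) (b : Bool) (v : V) :
    Set (V → Bool) :=
  {z | z v = b ∧ min k (G.degree v) ≤ ((G.neighborFinset v).filter (fun u => z u = b)).card}

/-- Fractional `q`-neighborhood exposure to condition `b`:
`v` and at least `q·deg v` of its neighbors get `b`. -/
def fracExp {V : Type*} [Fintype V] (G : SimpleGraph V) (q : ℝ) (b : Bool) (v : V) :
    Set (V → Bool) :=
  {z | z v = b ∧
    q * (G.degree v : ℝ) ≤ (((G.neighborFinset v).filter (fun u => z u = b)).card : ℝ)}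

/-! ### Auxiliary lemmas -/

lemma sum_prod_bool {J : Type*} [Fintype J] (g : J → Bool → ℝ) :
    ∑ x : J → Bool, ∏ j, g j (x j) = ∏ j, (g j false + g j true) := by
  rw [← Fintype.piFinset_univ, ← Finset.prod_univ_sum]
  simp [add_comm]

lemma coinWt_nonneg {J : Type*} [Fintype J] {p : ℝ} (h0 : 0 ≤ p) (h1 : p ≤ 1)
    (x : J → Bool) : 0 ≤ coinWt p x :=
  Finset.prod_nonneg fun j _ => by split <;> linarith

lemma coinWt_sum_one {J : Type*} [Fintype J] (p : ℝ) :
    ∑ x : J → Bool, coinWt p x = 1 := by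
  have := sum_prod_bool (J := J) (fun _ b => if b then p else 1 - p)
  simpa [coinWt] using this

/-- Expectation with respect to the cluster coins. -/
def exE (p : ℝ) {J : Type*} [Fintype J] (h : (J → Bool) → ℝ) : ℝ :=
  ∑ x : J → Bool, coinWt p x * h x

lemma exE_abs_le {J : Type*} [Fintype J] {p : ℝ} (h0 : 0 ≤ p) (h1 : p ≤ 1)
    {h : (J → Bool) → ℝ} {B : ℝ} (hB : ∀ x, |h x| ≤ B) : |exE p h| ≤ B := by
  calc |exE p h| ≤ ∑ x : J → Bool, |coinWt p x * h x| := Finset.abs_sum_le_sum_abs _ _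
    _ ≤ ∑ x : J → Bool, coinWt p x * B := by
        refine Finset.sum_le_sum fun x _ => ?_
        rw [abs_mul, abs_of_nonneg (coinWt_nonneg h0 h1 x)]
        exact mul_le_mul_of_nonneg_left (hB x) (coinWt_nonneg h0 h1 x)
    _ = B := by rw [← Finset.sum_mul, coinWt_sum_one, one_mul]

lemma exE_indep {J : Type*} [Fintype J] (p : ℝ) (q : J → Prop)
    (f g : (J → Bool) → ℝ)
    (hf : ∀ x x' : J → Bool, (∀ j, q j → x j = x' j) → f x = f x')
    (hg : ∀ x x' : J → Bool, (∀ j, ¬ q j → x j = x' j) → g x = g x') :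
    exE p (fun x => f x * g x) = exE p f * exE p g := by
  classical
  set φ : (J → Bool) → (J → Bool) → (J → Bool) := fun x y j => if q j then x j else y j with hφ
  have hinv : ∀ x y : J → Bool, φ (φ x y) (φ y x) = x := by
    intro x y; funext j; by_cases h : q j <;> simp [hφ, h]
  set ψ : (J → Bool) × (J → Bool) ≃ (J → Bool) × (J → Bool) :=
    { toFun := fun z => (φ z.1 z.2, φ z.2 z.1),
      invFun := fun z => (φ z.1 z.2, φ z.2 z.1),
      left_inv := fun z => Prod.ext (hinv z.1 z.2) (hinv z.2 z.1),
      right_inv := fun z => Prod.ext (hinv z.1 z.2) (hinv z.2 z.1) } with hψ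
  have hW : ∀ x y : J → Bool, coinWt p (φ x y) * coinWt p (φ y x) = coinWt p x * coinWt p y := by
    intro x y
    unfold coinWt
    rw [← Finset.prod_mul_distrib, ← Finset.prod_mul_distrib]
    exact Finset.prod_congr rfl fun j _ => by by_cases h : q j <;> simp [hφ, h, mul_comm]
  have hf' : ∀ x y : J → Bool, f (φ x y) = f x := fun x y =>
    hf _ _ fun j hj => by simp [hφ, hj]
  have hg' : ∀ x y : J → Bool, g (φ y x) = g x := fun x y =>
    hg _ _ fun j hj => by simp [hφ, hj]
  have main : exE p f * exE p g = exE p (fun x => f x * g x) := by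
    calc exE p f * exE p g
        = ∑ x : J → Bool, ∑ y : J → Bool, (coinWt p x * f x) * (coinWt p y * g y) :=
          Finset.sum_mul_sum _ _ _ _
      _ = ∑ z : (J → Bool) × (J → Bool), (coinWt p z.1 * f z.1) * (coinWt p z.2 * g z.2) :=
          (Fintype.sum_prod_type
            (f := fun z : (J → Bool) × (J → Bool) =>
              (coinWt p z.1 * f z.1) * (coinWt p z.2 * g z.2))).symm
      _ = ∑ z : (J → Bool) × (J → Bool),
            (coinWt p (ψ z).1 * f ((ψ z).1)) * (coinWt p (ψ z).2 * g ((ψ z).2)) :=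
          (Equiv.sum_comp ψ fun z => (coinWt p z.1 * f z.1) * (coinWt p z.2 * g z.2)).symm
      _ = ∑ z : (J → Bool) × (J → Bool), (coinWt p z.1 * coinWt p z.2) * (f z.1 * g z.1) := by
          refine Finset.sum_congr rfl fun z _ => ?_
          rw [show (ψ z).1 = φ z.1 z.2 from rfl, show (ψ z).2 = φ z.2 z.1 from rfl,
            hf', hg']
          rw [show coinWt p (φ z.1 z.2) * f z.1 * (coinWt p (φ z.2 z.1) * g z.1)
              = (coinWt p (φ z.1 z.2) * coinWt p (φ z.2 z.1)) * (f z.1 * g z.1) by ring, hW]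
      _ = ∑ x : J → Bool, ∑ y : J → Bool, (coinWt p x * coinWt p y) * (f x * g x) :=
          Fintype.sum_prod_type
            (f := fun z : (J → Bool) × (J → Bool) =>
              (coinWt p z.1 * coinWt p z.2) * (f z.1 * g z.1))
      _ = ∑ x : J → Bool, (coinWt p x * (f x * g x)) * ∑ y : J → Bool, coinWt p y := by
          refine Finset.sum_congr rfl fun x _ => ?_
          rw [Finset.mul_sum]
          exact Finset.sum_congr rfl fun y _ => by ring
      _ = exE p (fun x => f x * g x) := by
          rw [coinWt_sum_one]
          exact Finset.sum_congr rfl fun x _ => by rw [mul_one]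
  exact main.symm

lemma clusterPr_ge {V : Type*} [Fintype V] {J : Type*} [Fintype J]
    {p : ℝ} (h0 : 0 < p) (h1 : p < 1) (c : V → J) (A : Set (V → Bool)) (b : Bool)
    (T : Finset V) (hA : ∀ z : V → Bool, (∀ v ∈ T, z v = b) → z ∈ A) :
    min p (1 - p) ^ T.card ≤ clusterPr p c A := by
  classical
  set S : Finset J := T.image c with hS
  set base : ℝ := if b then p else 1 - p with hbase
  have hb0 : 0 < base := by rw [hbase]; split <;> linarith
  have hmb : min p (1 - p) ≤ base := by
    rw [hbase]; split
    · exact min_le_left _ _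
    · exact min_le_right _ _
  have hm0 : 0 ≤ min p (1 - p) := le_min (by linarith) (by linarith)
  have hm1 : min p (1 - p) ≤ 1 := le_trans (min_le_left _ _) (by linarith)
  have key : ∑ x : J → Bool, coinWt p x * (if ∀ j ∈ S, x j = b then 1 else 0)
      = base ^ S.card := by
    have hterm : ∀ x : J → Bool, coinWt p x * (if ∀ j ∈ S, x j = b then 1 else 0)
        = ∏ j, ((if x j then p else 1 - p) * (if j ∈ S then (if x j = b then 1 else 0) else 1)) := by
      intro x
      rw [Finset.prod_mul_distrib]
      congr 1
      rw [Finset.prod_ite_mem Finset.univ S (fun j => if x j = b then (1:ℝ) else 0),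
        Finset.univ_inter, Finset.prod_boole]
      congr!
    calc ∑ x : J → Bool, coinWt p x * (if ∀ j ∈ S, x j = b then 1 else 0)
        = ∑ x : J → Bool, ∏ j, ((if x j then p else 1 - p) *
            (if j ∈ S then (if x j = b then (1:ℝ) else 0) else 1)) :=
          Finset.sum_congr rfl fun x _ => hterm x
      _ = ∏ j, (((if (false : Bool) then p else 1-p) * (if j ∈ S then (if false = b then (1:ℝ) else 0) else 1))
            + ((if (true : Bool) then p else 1-p) * (if j ∈ S then (if true = b then (1:ℝ) else 0) else 1))) :=
          sum_prod_bool (fun j y => (if y then p else 1 - p) *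
            (if j ∈ S then (if y = b then (1:ℝ) else 0) else 1))
      _ = ∏ j, (if j ∈ S then base else 1) := by
          refine Finset.prod_congr rfl fun j _ => ?_
          by_cases hj : j ∈ S <;> cases b <;> simp [hj, hbase]
      _ = base ^ S.card := by
          rw [Finset.prod_ite_mem Finset.univ S (fun _ => base), Finset.univ_inter,
            Finset.prod_const]
  have mono : ∑ x : J → Bool, coinWt p x * (if ∀ j ∈ S, x j = b then 1 else 0)
      ≤ clusterPr p c A := by
    refine Finset.sum_le_sum fun x _ => ?_
    refine mul_le_mul_of_nonneg_left ?_ (coinWt_nonneg (le_of_lt h0) (le_of_lt h1) x)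
    by_cases hx : ∀ j ∈ S, x j = b
    · rw [if_pos hx, if_pos]
      exact hA _ fun v hv => hx (c v) (Finset.mem_image_of_mem c hv)
    · rw [if_neg hx]
      split <;> norm_num
  refine le_trans ?_ (le_trans (le_of_eq key.symm) mono)
  calc min p (1 - p) ^ T.card ≤ min p (1 - p) ^ S.card :=
        pow_le_pow_of_le_one hm0 hm1 (Finset.card_image_le)
    _ ≤ base ^ S.card := pow_le_pow_left₀ hm0 hmb _

/-- The exposure condition families we consider. -/
def IsNbhdExp {V : Type*} [Fintype V] (G : SimpleGraph V) (σ : V → Set (V → Bool))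
    (b : Bool) : Prop :=
  σ = fullExp G b ∨ (∃ k : ℕ, σ = absExp G k b) ∨
    (∃ q : ℝ, q ∈ Set.Icc (0:ℝ) 1 ∧ σ = fracExp G q b)

lemma IsNbhdExp.mem_of_all {V : Type*} [Fintype V] {G : SimpleGraph V}
    {σ : V → Set (V → Bool)} {b : Bool} (h : IsNbhdExp G σ b) (i : V) (z : V → Bool)
    (hz : ∀ u ∈ insert i (G.neighborFinset i), z u = b) : z ∈ σ i := by
  have hi : z i = b := hz i (Finset.mem_insert_self _ _)
  have hn : ∀ u ∈ G.neighborFinset i, z u = b := fun u hu =>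
    hz u (Finset.mem_insert_of_mem hu)
  have hfull : (G.neighborFinset i).filter (fun u => z u = b) = G.neighborFinset i :=
    Finset.filter_true_of_mem hn
  rcases h with h | ⟨k, h⟩ | ⟨q, hq, h⟩ <;> subst h
  · exact ⟨hi, hn⟩
  · refine ⟨hi, ?_⟩
    rw [hfull, G.card_neighborFinset_eq_degree]
    exact min_le_right _ _
  · refine ⟨hi, ?_⟩
    rw [hfull, G.card_neighborFinset_eq_degree]
    exact mul_le_of_le_one_left (Nat.cast_nonneg _) hq.2

lemma IsNbhdExp.mem_congr {V : Type*} [Fintype V] {G : SimpleGraph V}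
    {σ : V → Set (V → Bool)} {b : Bool} (h : IsNbhdExp G σ b) (i : V) {z z' : V → Bool}
    (hz : ∀ u ∈ insert i (G.neighborFinset i), z u = z' u) : z ∈ σ i ↔ z' ∈ σ i := by
  have hi : z i = z' i := hz i (Finset.mem_insert_self _ _)
  have hn : ∀ u ∈ G.neighborFinset i, z u = z' u := fun u hu =>
    hz u (Finset.mem_insert_of_mem hu)
  have hfilt : (G.neighborFinset i).filter (fun u => z u = b)
      = (G.neighborFinset i).filter (fun u => z' u = b) :=
    Finset.filter_congr fun u hu => by rw [hn u hu]
  rcases h with h | ⟨k, h⟩ | ⟨q, hq, h⟩ <;> subst h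
  · constructor <;> rintro ⟨h1, h2⟩
    · exact ⟨hi ▸ h1, fun u hu => (hn u hu) ▸ h2 u hu⟩
    · exact ⟨hi.symm ▸ h1, fun u hu => (hn u hu).symm ▸ h2 u hu⟩
  · constructor <;> rintro ⟨h1, h2⟩
    · exact ⟨hi ▸ h1, hfilt ▸ h2⟩
    · exact ⟨hi.symm ▸ h1, hfilt.symm ▸ h2⟩
  · constructor <;> rintro ⟨h1, h2⟩
    · exact ⟨hi ▸ h1, hfilt ▸ h2⟩
    · exact ⟨hi.symm ▸ h1, hfilt.symm ▸ h2⟩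

/-- Counting lemma: number of vertices whose cluster-neighborhoods meet that of `i`. -/
lemma count_rel {V : Type*} [Fintype V] (G : SimpleGraph V) {D M : ℕ}
    (hdeg : ∀ v, G.degree v ≤ D) {m : ℕ} (c : V → Fin m)
    (hcl : ∀ j : Fin m, (Finset.univ.filter (fun v => c v = j)).card ≤ M) (i : V) :
    (Finset.univ.filter (fun i' : V =>
      ¬ Disjoint ((insert i (G.neighborFinset i)).image c)
        ((insert i' (G.neighborFinset i')).image c))).card ≤ (D+1) * (M * (D+1)) := by
  classical
  set nb : V → Finset V := fun v => insert v (G.neighborFinset v) with hnbdef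
  have hnb : ∀ v, (nb v).card ≤ D + 1 := by
    intro v
    refine le_trans (Finset.card_insert_le _ _) ?_
    rw [G.card_neighborFinset_eq_degree]
    exact Nat.add_le_add_right (hdeg v) 1
  have hmem : ∀ v i' : V, v ∈ nb i' → i' ∈ nb v := by
    intro v i' hv
    rcases Finset.mem_insert.1 hv with h | h
    · subst h; exact Finset.mem_insert_self _ _
    · exact Finset.mem_insert_of_mem
        ((SimpleGraph.mem_neighborFinset _ _ _).2
          ((SimpleGraph.mem_neighborFinset _ _ _).1 h).symm)
  have hsub : (Finset.univ.filter (fun i' : V =>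
      ¬ Disjoint ((nb i).image c) ((nb i').image c))) ⊆
      (nb i).biUnion (fun u => (Finset.univ.filter (fun v => c v = c u)).biUnion nb) := by
    intro i' hi'
    have hnd : ¬ Disjoint ((nb i).image c) ((nb i').image c) :=
      (Finset.mem_filter.1 hi').2
    rcases Finset.not_disjoint_iff.1 hnd with ⟨j, hj1, hj2⟩
    rcases Finset.mem_image.1 hj1 with ⟨u, hu, hju⟩
    rcases Finset.mem_image.1 hj2 with ⟨v, hv, hjv⟩
    refine Finset.mem_biUnion.2 ⟨u, hu, Finset.mem_biUnion.2 ⟨v, ?_, hmem v i' hv⟩⟩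
    exact Finset.mem_filter.2 ⟨Finset.mem_univ _, by rw [hjv, hju]⟩
  refine le_trans (Finset.card_le_card hsub) ?_
  calc ((nb i).biUnion fun u => (Finset.univ.filter (fun v => c v = c u)).biUnion nb).card
      ≤ ∑ u ∈ nb i, ((Finset.univ.filter (fun v => c v = c u)).biUnion nb).card :=
        Finset.card_biUnion_le
    _ ≤ ∑ _u ∈ nb i, M * (D+1) := by
        refine Finset.sum_le_sum fun u _ => ?_
        refine le_trans Finset.card_biUnion_le ?_
        refine le_trans (Finset.sum_le_sum fun v _ => hnb v) ?_
        rw [Finset.sum_const, smul_eq_mul]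
        exact Nat.mul_le_mul_right _ (hcl (c u))
    _ = (nb i).card * (M * (D+1)) := by rw [Finset.sum_const, smul_eq_mul]
    _ ≤ (D+1) * (M * (D+1)) := Nat.mul_le_mul_right _ (hnb i)

/-- **O(1/n) variance for bounded degrees and bounded clusters.**
For all `D, M ≥ 1`, `p ∈ (0,1)`, `Y_M > 0` there is a constant `C` such that for
every graph of maximum degree at most `D`, every clustering into clusters of size
at most `M`, cluster randomization with parameter `p`, any one of the exposure
conditions (full, absolute `k`-, or fractional `q`-neighborhood), and any responses
constant on each exposure event and bounded by `Y_M` in absolute value, the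
variance of the Horvitz–Thompson estimator is at most `C/n`. -/
theorem statement8 (D M : ℕ) (hD : 1 ≤ D) (hM : 1 ≤ M)
    (p : ℝ) (hp : p ∈ Set.Ioo (0:ℝ) 1) (YM : ℝ) (hYM : 0 < YM) :
    ∃ C : ℝ, ∀ (V : Type) [Fintype V] (G : SimpleGraph V),
      ∀ (m : ℕ) (c : V → Fin m),
      (∀ v, G.degree v ≤ D) →
      (∀ j : Fin m, (Finset.univ.filter (fun v => c v = j)).card ≤ M) →
      ∀ σ1 σ0 : V → Set (V → Bool),
      ((σ1 = fullExp G true ∧ σ0 = fullExp G false) ∨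
       (∃ k : ℕ, σ1 = absExp G k true ∧ σ0 = absExp G k false) ∨
       (∃ q : ℝ, q ∈ Set.Icc (0:ℝ) 1 ∧ σ1 = fracExp G q true ∧ σ0 = fracExp G q false)) →
      ∀ Y : V → (V → Bool) → ℝ,
      (∀ i, ∀ z ∈ σ1 i, ∀ z' ∈ σ1 i, Y i z = Y i z') →
      (∀ i, ∀ z ∈ σ0 i, ∀ z' ∈ σ0 i, Y i z = Y i z') →
      (∀ i z, |Y i z| ≤ YM) →
      clusterVar p c σ1 σ0 Y ≤ C / (Fintype.card V : ℝ) := by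
  classical
  obtain ⟨hp0, hp1⟩ := hp
  set α : ℝ := min p (1 - p) ^ (D + 1) with hα
  have hmin0 : 0 < min p (1 - p) := lt_min hp0 (by linarith)
  have hmin1 : min p (1 - p) ≤ 1 := le_trans (min_le_left _ _) (by linarith)
  have hα0 : 0 < α := pow_pos hmin0 _
  set B : ℝ := YM / α + YM / α with hBdef
  have hB0 : 0 < B := by positivity
  refine ⟨((D:ℝ)+1) * ((M:ℝ) * ((D:ℝ)+1)) * (2 * B^2), ?_⟩
  intro V _ G m c hdeg hcl σ1 σ0 hσ Y hc1 hc0 hYb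
  have hexp1 : IsNbhdExp G σ1 true := by
    rcases hσ with ⟨h,_⟩|⟨k,h,_⟩|⟨q,hq,h,_⟩
    exacts [Or.inl h, Or.inr (Or.inl ⟨k,h⟩), Or.inr (Or.inr ⟨q,hq,h⟩)]
  have hexp0 : IsNbhdExp G σ0 false := by
    rcases hσ with ⟨_,h⟩|⟨k,_,h⟩|⟨q,hq,_,h⟩
    exacts [Or.inl h, Or.inr (Or.inl ⟨k,h⟩), Or.inr (Or.inr ⟨q,hq,h⟩)]
  set nb : V → Finset V := fun v => insert v (G.neighborFinset v) with hnbdef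
  have hnbc : ∀ v, (nb v).card ≤ D + 1 := by
    intro v
    refine le_trans (Finset.card_insert_le _ _) ?_
    rw [G.card_neighborFinset_eq_degree]
    exact Nat.add_le_add_right (hdeg v) 1
  -- probability lower bounds
  have hpr : ∀ (σ : V → Set (V → Bool)) (b : Bool), IsNbhdExp G σ b →
      ∀ i, α ≤ clusterPr p c (σ i) := by
    intro σ b hb i
    refine le_trans ?_ (clusterPr_ge hp0 hp1 c (σ i) b (nb i)
      (fun z hz => hb.mem_of_all i z hz))
    exact pow_le_pow_of_le_one hmin0.le hmin1 (hnbc i)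
  have hpr1 : ∀ i, α ≤ clusterPr p c (σ1 i) := hpr σ1 true hexp1
  have hpr0 : ∀ i, α ≤ clusterPr p c (σ0 i) := hpr σ0 false hexp0
  set f : V → (Fin m → Bool) → ℝ := fun i x =>
    (if (fun v => x (c v)) ∈ σ1 i then Y i (fun v => x (c v)) else 0) / clusterPr p c (σ1 i)
    - (if (fun v => x (c v)) ∈ σ0 i then Y i (fun v => x (c v)) else 0) / clusterPr p c (σ0 i)
    with hfdef
  -- boundedness
  have hfb : ∀ i x, |f i x| ≤ B := by
    intro i x
    set z : V → Bool := fun v => x (c v) with hz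
    have hnum : ∀ (A : Set (V → Bool)), |(if z ∈ A then Y i z else 0)| ≤ YM := by
      intro A; split
      · exact hYb i z
      · rw [abs_zero]; exact hYM.le
    have hq : ∀ (A : Set (V → Bool)), α ≤ clusterPr p c A →
        |(if z ∈ A then Y i z else 0) / clusterPr p c A| ≤ YM / α := by
      intro A hA
      rw [abs_div, abs_of_pos (lt_of_lt_of_le hα0 hA)]
      exact div_le_div₀ hYM.le (hnum A) hα0 hA
    calc |f i x| ≤ |(if z ∈ σ1 i then Y i z else 0) / clusterPr p c (σ1 i)|
          + |(if z ∈ σ0 i then Y i z else 0) / clusterPr p c (σ0 i)| := abs_sub _ _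
      _ ≤ YM / α + YM / α := add_le_add (hq _ (hpr1 i)) (hq _ (hpr0 i))
  -- locality
  have hloc : ∀ i (x x' : Fin m → Bool),
      (∀ j ∈ (nb i).image c, x j = x' j) → f i x = f i x' := by
    intro i x x' hx
    have hzz : ∀ u ∈ nb i, (fun v => x (c v)) u = (fun v => x' (c v)) u := fun u hu =>
      hx (c u) (Finset.mem_image_of_mem c hu)
    have hm1 : ((fun v => x (c v)) ∈ σ1 i) ↔ ((fun v => x' (c v)) ∈ σ1 i) :=
      hexp1.mem_congr i hzz
    have hm0 : ((fun v => x (c v)) ∈ σ0 i) ↔ ((fun v => x' (c v)) ∈ σ0 i) :=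
      hexp0.mem_congr i hzz
    have e1 : (if (fun v => x (c v)) ∈ σ1 i then Y i (fun v => x (c v)) else 0)
        = (if (fun v => x' (c v)) ∈ σ1 i then Y i (fun v => x' (c v)) else 0) := by
      by_cases h : (fun v => x (c v)) ∈ σ1 i
      · rw [if_pos h, if_pos (hm1.1 h)]
        exact hc1 i _ h _ (hm1.1 h)
      · rw [if_neg h, if_neg (fun hh => h (hm1.2 hh))]
    have e0 : (if (fun v => x (c v)) ∈ σ0 i then Y i (fun v => x (c v)) else 0)
        = (if (fun v => x' (c v)) ∈ σ0 i then Y i (fun v => x' (c v)) else 0) := by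
      by_cases h : (fun v => x (c v)) ∈ σ0 i
      · rw [if_pos h, if_pos (hm0.1 h)]
        exact hc0 i _ h _ (hm0.1 h)
      · rw [if_neg h, if_neg (fun hh => h (hm0.2 hh))]
    simp only [hfdef]
    rw [e1, e0]
  -- variance identity
  have e1 : exE p (fun x => (∑ i, f i x)^2)
      = ∑ i : V, ∑ i' : V, exE p (fun x => f i x * f i' x) := by
    unfold exE
    rw [Finset.sum_congr rfl (fun x _ => show coinWt p x * (∑ i, f i x)^2
      = ∑ i : V, ∑ i' : V, coinWt p x * (f i x * f i' x) by
        rw [sq, Finset.sum_mul_sum, Finset.mul_sum]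
        exact Finset.sum_congr rfl fun i _ => by rw [Finset.mul_sum]), Finset.sum_comm]
    exact Finset.sum_congr rfl fun i _ => Finset.sum_comm
  have e2 : exE p (fun x => ∑ i, f i x) = ∑ i, exE p (f i) := by
    unfold exE
    rw [Finset.sum_congr rfl (fun x _ => Finset.mul_sum Finset.univ (fun i => f i x)
      (coinWt p x)), Finset.sum_comm]
  have hvar : clusterVar p c σ1 σ0 Y = ((Fintype.card V : ℝ)⁻¹)^2 *
      ∑ i : V, ∑ i' : V,
        (exE p (fun x => f i x * f i' x) - exE p (f i) * exE p (f i')) := by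
    have hA : clusterVar p c σ1 σ0 Y
        = exE p (fun x => ((Fintype.card V : ℝ)⁻¹ * ∑ i, f i x)^2)
          - (exE p (fun x => (Fintype.card V : ℝ)⁻¹ * ∑ i, f i x))^2 := rfl
    have hB1 : exE p (fun x => ((Fintype.card V : ℝ)⁻¹ * ∑ i, f i x)^2)
        = ((Fintype.card V : ℝ)⁻¹)^2 * exE p (fun x => (∑ i, f i x)^2) := by
      unfold exE
      rw [Finset.mul_sum]
      exact Finset.sum_congr rfl fun x _ => by ring
    have hB2 : exE p (fun x => (Fintype.card V : ℝ)⁻¹ * ∑ i, f i x)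
        = (Fintype.card V : ℝ)⁻¹ * exE p (fun x => ∑ i, f i x) := by
      unfold exE
      rw [Finset.mul_sum]
      exact Finset.sum_congr rfl fun x _ => by ring
    have hY : (∑ i, exE p (f i))^2 = ∑ i : V, ∑ i' : V, exE p (f i) * exE p (f i') := by
      rw [sq, Finset.sum_mul_sum]
    rw [hA, hB1, hB2, e1, e2]
    simp only [Finset.sum_sub_distrib]
    rw [mul_pow, hY]
    ring
  -- covariance bound
  have hcov : ∀ i i' : V,
      exE p (fun x => f i x * f i' x) - exE p (f i) * exE p (f i')
      ≤ if Disjoint ((nb i).image c) ((nb i').image c) then 0 else 2 * B^2 := by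
    intro i i'
    by_cases hd : Disjoint ((nb i).image c) ((nb i').image c)
    · rw [if_pos hd]
      have hind := exE_indep p (fun j => j ∈ (nb i).image c) (f i) (f i')
        (fun x x' h => hloc i x x' (fun j hj => h j hj))
        (fun x x' h => hloc i' x x'
          (fun j hj => h j (fun hji => (Finset.disjoint_left.1 hd hji) hj)))
      rw [hind]
      simp
    · rw [if_neg hd]
      have h1 : |exE p (fun x => f i x * f i' x)| ≤ B * B :=
        exE_abs_le hp0.le hp1.le (fun x => by
          rw [abs_mul]
          exact mul_le_mul (hfb i x) (hfb i' x) (abs_nonneg _) hB0.le)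
      have h2 : |exE p (f i)| ≤ B := exE_abs_le hp0.le hp1.le (hfb i)
      have h3 : |exE p (f i')| ≤ B := exE_abs_le hp0.le hp1.le (hfb i')
      have h4 : |exE p (f i) * exE p (f i')| ≤ B * B := by
        rw [abs_mul]; exact mul_le_mul h2 h3 (abs_nonneg _) hB0.le
      have l1 := (abs_le.1 h1).2
      have l4 := (abs_le.1 h4).1
      nlinarith
  -- summation
  set Creal : ℝ := ((D:ℝ)+1) * ((M:ℝ) * ((D:ℝ)+1)) * (2 * B^2) with hCreal
  have hrow : ∀ i : V, ∑ i' : V,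
      (exE p (fun x => f i x * f i' x) - exE p (f i) * exE p (f i')) ≤ Creal := by
    intro i
    calc ∑ i' : V, (exE p (fun x => f i x * f i' x) - exE p (f i) * exE p (f i'))
        ≤ ∑ i' : V, (if Disjoint ((nb i).image c) ((nb i').image c) then 0 else 2 * B^2) :=
          Finset.sum_le_sum fun i' _ => hcov i i'
      _ = (Finset.univ.filter (fun i' : V =>
            ¬ Disjoint ((nb i).image c) ((nb i').image c))).card • (2 * B^2) := by
          rw [Finset.sum_ite, Finset.sum_const, Finset.sum_const, smul_zero, zero_add]
      _ ≤ (((D+1) * (M * (D+1)) : ℕ) : ℝ) * (2 * B^2) := by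
          rw [nsmul_eq_mul]
          refine mul_le_mul_of_nonneg_right ?_ (by positivity)
          exact_mod_cast count_rel G hdeg c hcl i
      _ = Creal := by rw [hCreal]; push_cast; ring
  have hsum : ∑ i : V, ∑ i' : V,
      (exE p (fun x => f i x * f i' x) - exE p (f i) * exE p (f i'))
      ≤ (Fintype.card V : ℝ) * Creal := by
    refine le_trans (Finset.sum_le_sum fun i _ => hrow i) ?_
    rw [Finset.sum_const, Finset.card_univ, nsmul_eq_mul]
  rw [hvar]
  have hfinal : ((Fintype.card V : ℝ)⁻¹)^2 * ((Fintype.card V : ℝ) * Creal)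
      ≤ Creal / (Fintype.card V : ℝ) := by
    rcases Nat.eq_zero_or_pos (Fintype.card V) with h | h
    · rw [h]; simp
    · have hn : (0:ℝ) < (Fintype.card V : ℝ) := by exact_mod_cast h
      refine le_of_eq ?_
      field_simp
  refine le_trans ?_ hfinal
  exact mul_le_mul_of_nonneg_left hsum (by positivity)


end
end

section
/- Let G be the k-th power of the cycle on n vertices (each vertex adjacent to the k nearest vertices on each side), so G is d-regular with d = 2k. Suppose d+1 divides n, n ≥ 3(d+1), and the vertices are partitioned into contiguous blocks of c = d+1 consecutive vertices as clusters. Perform cluster randomization with parameter p ∈ (0,1), use full neighborhood exposure, and let the responses satisfy Y_i(z) = Y_i(σ^1_i)·1[z ∈ σ^1_i] with 0 ≤ Y_i(σ^1_i) ≤ Y_M (all control responses equal to 0). Then Var[τ̂(Z)] ≤ Y_M² · (p^{−2} − 1) · (3d + 2) / n. -/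
open Finset
open scoped Classical

noncomputable section

/-- The k-th power of the cycle on n vertices; `cycPow n 1` is the cycle itself. -/
def cycPow (n k : ℕ) : SimpleGraph (Fin n) where
  Adj i j := i ≠ j ∧ ∃ t, 1 ≤ t ∧ t ≤ k ∧
    ((i.val + t) % n = j.val ∨ (j.val + t) % n = i.val)
  symm := by
    constructor
    rintro i j ⟨hne, t, h1, h2, h⟩
    exact ⟨hne.symm, t, h1, h2, h.symm⟩
  loopless := by constructor; rintro i ⟨hne, -⟩; exact hne rfl

/-!
Write `S i` for the set of clusters met by the closed neighbourhood of `i`. The estimator is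
`∑ i, Y₁ i / (n p^|S i|) · 1[every cluster of S i is treated]`, so its variance is the sum of the
covariances of these terms. The covariance of the terms of `i` and `j` is
`Y₁ i Y₁ j (p^{-|S i ∩ S j|} - 1) / n²`: it vanishes unless `S i` and `S j` meet, and is at most
`Y_M² (p⁻² - 1) / n²` because a closed neighbourhood, being `d + 1` consecutive vertices, meets at
most two consecutive blocks. These two blocks span `2(d + 1)` consecutive vertices, and the
vertices whose closed neighbourhoods reach them lie in a window of `2(d + 1) + d = 3d + 2`
vertices, so each `i` has at most `3d + 2` nonzero covariances.
-/

section CoinVectors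

variable {J : Type*} [Fintype J]

def allTreated (S : Finset J) (x : J → Bool) : ℝ :=
  if ∀ j ∈ S, x j = true then 1 else 0

def coinCov (p : ℝ) (f g : (J → Bool) → ℝ) : ℝ :=
  ∑ x, coinWt p x * (f x * g x) - (∑ x, coinWt p x * f x) * ∑ x, coinWt p x * g x

lemma allTreated_mul_allTreated (S T : Finset J) (x : J → Bool) :
    allTreated S x * allTreated T x = allTreated (S ∪ T) x := by
  simp only [allTreated, Finset.forall_mem_union]
  split_ifs <;> simp_all

lemma sum_coinWt_mul_allTreated (p : ℝ) (S : Finset J) :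
    ∑ x, coinWt p x * allTreated S x = p ^ #S := by
  have hprod : ∀ x : J → Bool,
      allTreated S x = ∏ j, if j ∈ S then (if x j then 1 else 0) else 1 := by
    intro x
    simp [allTreated, Finset.prod_ite_mem, Finset.prod_boole]
  calc ∑ x, coinWt p x * allTreated S x
      = ∑ x : J → Bool, ∏ j,
          (if x j then p else 1 - p) * (if j ∈ S then (if x j then 1 else 0) else 1) := by
        refine Finset.sum_congr rfl fun x _ => ?_
        rw [coinWt, hprod, ← Finset.prod_mul_distrib]
    _ = ∏ j, ∑ b : Bool,
          (if b then p else 1 - p) * (if j ∈ S then (if b then 1 else 0) else 1) := by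
        rw [Fintype.prod_sum]
    _ = ∏ j, if j ∈ S then p else 1 := by
        refine Finset.prod_congr rfl fun j _ => ?_
        by_cases hj : j ∈ S <;> simp [hj]
    _ = p ^ #S := by rw [Finset.prod_ite_mem, Finset.univ_inter, Finset.prod_const]

lemma coinCov_smul_allTreated (p a b : ℝ) (S T : Finset J) :
    coinCov p (fun x => a * allTreated S x) (fun x => b * allTreated T x)
      = a * b * (p ^ #(S ∪ T) - p ^ #S * p ^ #T) := by
  have hmean : ∀ (c : ℝ) (f : (J → Bool) → ℝ),
      ∑ x, coinWt p x * (c * f x) = c * ∑ x, coinWt p x * f x := fun c f => by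
    rw [Finset.mul_sum]; exact Finset.sum_congr rfl fun x _ => by ring
  have hprod : ∀ x, a * allTreated S x * (b * allTreated T x) = a * b * allTreated (S ∪ T) x :=
    fun x => by rw [← allTreated_mul_allTreated]; ring
  simp only [coinCov, hprod, hmean, sum_coinWt_mul_allTreated]
  ring

lemma coinCov_normalized_allTreated {p : ℝ} (hp : p ≠ 0) (a b : ℝ) (S T : Finset J) :
    coinCov p (fun x => a / p ^ #S * allTreated S x) (fun x => b / p ^ #T * allTreated T x)
      = a * b * ((p ^ #(S ∩ T))⁻¹ - 1) := by
  have hunion : p ^ #(S ∪ T) * p ^ #(S ∩ T) = p ^ #S * p ^ #T := by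
    rw [← pow_add, ← pow_add, Finset.card_union_add_card_inter]
  rw [coinCov_smul_allTreated, eq_div_of_mul_eq (pow_ne_zero _ hp) hunion]
  field_simp

lemma sum_coinWt_mul_sq_sub_sq {I : Type*} [Fintype I] (p : ℝ) (g : I → (J → Bool) → ℝ) :
    ∑ x, coinWt p x * (∑ i, g i x) ^ 2 - (∑ x, coinWt p x * ∑ i, g i x) ^ 2
      = ∑ i, ∑ j, coinCov p (g i) (g j) := by
  have hsq : ∀ x, coinWt p x * (∑ i, g i x) ^ 2 = ∑ i, ∑ j, coinWt p x * (g i x * g j x) :=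
    fun x => by simp_rw [sq, Finset.sum_mul_sum, Finset.mul_sum]
  have hlin : ∑ x, coinWt p x * ∑ i, g i x = ∑ i, ∑ x, coinWt p x * g i x := by
    simp_rw [Finset.mul_sum]; exact Finset.sum_comm
  simp only [coinCov, Finset.sum_sub_distrib, hsq, hlin]
  rw [sq, Finset.sum_mul_sum, Finset.sum_comm]
  congr 1
  exact Finset.sum_congr rfl fun i _ => Finset.sum_comm

end CoinVectors

lemma mul_inv_pow_sub_one_le {p : ℝ} (hp0 : 0 < p) (hp1 : p ≤ 1) {a b M : ℝ}
    (ha : a ∈ Set.Icc 0 M) (hb : b ∈ Set.Icc 0 M) {t D : ℕ} (htD : t ≤ D) :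
    a * b * ((p ^ t)⁻¹ - 1) ≤ M ^ 2 * ((p ^ D)⁻¹ - 1) := by
  have hpt : 0 ≤ (p ^ t)⁻¹ - 1 :=
    sub_nonneg.mpr (one_le_inv₀ (pow_pos hp0 t) |>.mpr (pow_le_one₀ hp0.le hp1))
  have hpD : (p ^ t)⁻¹ ≤ (p ^ D)⁻¹ :=
    inv_anti₀ (pow_pos hp0 D) (pow_le_pow_of_le_one hp0.le hp1 htD)
  have hab : a * b ≤ M ^ 2 := by nlinarith [ha.1, ha.2, hb.1, hb.2]
  calc a * b * ((p ^ t)⁻¹ - 1) ≤ M ^ 2 * ((p ^ t)⁻¹ - 1) := by gcongr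
    _ ≤ M ^ 2 * ((p ^ D)⁻¹ - 1) := by gcongr

section HorvitzThompson

variable {V J : Type*} [Fintype V] [Fintype J]

lemma clusterPr_eq_pow (p : ℝ) (c : V → J) {A : Set (V → Bool)} {S : Finset J}
    (hA : ∀ x : J → Bool, (fun v => x (c v)) ∈ A ↔ ∀ j ∈ S, x j = true) :
    clusterPr p c A = p ^ #S := by
  rw [clusterPr, ← sum_coinWt_mul_allTreated]
  simp only [allTreated, hA]

lemma htEst_treatmentOnly (p : ℝ) (c : V → J) (σ1 σ0 : V → Set (V → Bool)) (S : V → Finset J)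
    (hσ1 : ∀ i (x : J → Bool), (fun v => x (c v)) ∈ σ1 i ↔ ∀ j ∈ S i, x j = true)
    (hσ : ∀ i, Disjoint (σ0 i) (σ1 i)) (Y1 : V → ℝ) (x : J → Bool) :
    htEst (clusterPr p c) σ1 σ0 (fun i z => Y1 i * if z ∈ σ1 i then 1 else 0)
        (fun v => x (c v))
      = ∑ i, (Fintype.card V : ℝ)⁻¹ * Y1 i / p ^ #(S i) * allTreated (S i) x := by
  rw [htEst, Finset.mul_sum]
  refine Finset.sum_congr rfl fun i _ => ?_
  rw [clusterPr_eq_pow p c (hσ1 i)]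
  by_cases h1 : (fun v => x (c v)) ∈ σ1 i
  · have h0 : (fun v => x (c v)) ∉ σ0 i := Set.disjoint_right.mp (hσ i) h1
    rw [allTreated, if_pos ((hσ1 i x).mp h1), if_pos h1, if_pos h1, if_neg h0]
    ring
  · rw [allTreated, if_neg ((hσ1 i x).not.mp h1), if_neg h1]
    split_ifs <;> simp

theorem clusterVar_treatmentOnly_le {p : ℝ} (hp0 : 0 < p) (hp1 : p ≤ 1) (c : V → J)
    (σ1 σ0 : V → Set (V → Bool)) (S : V → Finset J)
    (hσ1 : ∀ i (x : J → Bool), (fun v => x (c v)) ∈ σ1 i ↔ ∀ j ∈ S i, x j = true)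
    (hσ : ∀ i, Disjoint (σ0 i) (σ1 i)) {D K : ℕ} (hS : ∀ i, #(S i) ≤ D)
    (hK : ∀ i, {j | ¬Disjoint (S i) (S j)}.ncard ≤ K) {YM : ℝ} (Y1 : V → ℝ)
    (hY1 : ∀ i, Y1 i ∈ Set.Icc 0 YM) :
    clusterVar p c σ1 σ0 (fun i z => Y1 i * if z ∈ σ1 i then 1 else 0)
      ≤ YM ^ 2 * ((p ^ D)⁻¹ - 1) * K / Fintype.card V := by
  set N : ℝ := (Fintype.card V : ℝ)
  set B := YM ^ 2 * ((p ^ D)⁻¹ - 1)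
  have hB : 0 ≤ B := mul_nonneg (sq_nonneg _)
    (sub_nonneg.mpr ((one_le_inv₀ (pow_pos hp0 D)).mpr (pow_le_one₀ hp0.le hp1)))
  have hcov : ∀ i j, coinCov p (fun x => N⁻¹ * Y1 i / p ^ #(S i) * allTreated (S i) x)
      (fun x => N⁻¹ * Y1 j / p ^ #(S j) * allTreated (S j) x)
      ≤ if Disjoint (S i) (S j) then 0 else (N⁻¹) ^ 2 * B := by
    intro i j
    rw [coinCov_normalized_allTreated hp0.ne']
    split_ifs with hdisj
    · simp [Finset.disjoint_iff_inter_eq_empty.mp hdisj]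
    · calc N⁻¹ * Y1 i * (N⁻¹ * Y1 j) * ((p ^ #(S i ∩ S j))⁻¹ - 1)
          = N⁻¹ ^ 2 * (Y1 i * Y1 j * ((p ^ #(S i ∩ S j))⁻¹ - 1)) := by ring
        _ ≤ N⁻¹ ^ 2 * B := by
          gcongr
          exact mul_inv_pow_sub_one_le hp0 hp1 (hY1 i) (hY1 j)
            ((Finset.card_le_card Finset.inter_subset_left).trans (hS i))
  calc clusterVar p c σ1 σ0 (fun i z => Y1 i * if z ∈ σ1 i then 1 else 0)
      = ∑ i, ∑ j, coinCov p (fun x => N⁻¹ * Y1 i / p ^ #(S i) * allTreated (S i) x)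
          (fun x => N⁻¹ * Y1 j / p ^ #(S j) * allTreated (S j) x) := by
        simp only [clusterVar, htEst_treatmentOnly p c σ1 σ0 S hσ1 hσ]
        exact sum_coinWt_mul_sq_sub_sq p _
    _ ≤ ∑ i : V, ∑ j, if Disjoint (S i) (S j) then 0 else (N⁻¹) ^ 2 * B := by
        gcongr with i _ j _; exact hcov i j
    _ ≤ ∑ i : V, K * ((N⁻¹) ^ 2 * B) := by
        gcongr with i _
        rw [Finset.sum_ite, Finset.sum_const_zero, zero_add, Finset.sum_const, nsmul_eq_mul]
        gcongr
        simpa [← Set.ncard_coe_finset] using hK i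
    _ = B * K / N := by
        rw [Finset.sum_const, Finset.card_univ, nsmul_eq_mul]
        change N * _ = _
        rcases eq_or_ne N 0 with hN | hN
        · simp [hN]
        · field_simp

end HorvitzThompson

section ClosedNeighborhoodClusters

variable {V J : Type*} [Fintype V]

def closedNbhdClusters [DecidableEq V] [DecidableEq J] (G : SimpleGraph V) (c : V → J) (i : V) :
    Finset J :=
  (insert i (G.neighborFinset i)).image c

lemma comp_mem_fullExp_true_iff [DecidableEq V] [DecidableEq J] (G : SimpleGraph V) (c : V → J)
    (i : V) (x : J → Bool) :
    (fun v => x (c v)) ∈ fullExp G true i ↔ ∀ j ∈ closedNbhdClusters G c i, x j = true := by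
  simp [fullExp, closedNbhdClusters]

lemma disjoint_fullExp_false_true (G : SimpleGraph V) (i : V) :
    Disjoint (fullExp G false i) (fullExp G true i) :=
  Set.disjoint_left.mpr fun z h0 h1 => by simp_all [fullExp]

end ClosedNeighborhoodClusters

lemma cycPow_closedNbhd_val {n k : ℕ} (hkn : k ≤ n) {i v : Fin n}
    (hv : v ∈ insert i ((cycPow n k).neighborFinset i)) :
    ∃ s ≤ 2 * k, v.val = ((i.val + (n - k)) % n + s) % n := by
  simp only [Nat.mod_add_mod]
  rcases Finset.mem_insert.mp hv with rfl | hadj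
  · refine ⟨k, by omega, ?_⟩
    rw [show v.val + (n - k) + k = v.val + n by omega, Nat.add_mod_right,
      Nat.mod_eq_of_lt v.isLt]
  · obtain ⟨-, t, ht1, htk, hit | hvt⟩ := (SimpleGraph.mem_neighborFinset _ _ _).mp hadj
    · refine ⟨k + t, by omega, ?_⟩
      rw [show i.val + (n - k) + (k + t) = i.val + t + n by omega, Nat.add_mod_right, hit]
    · refine ⟨k - t, by omega, ?_⟩
      rw [← hvt, add_assoc, Nat.mod_add_mod,
        show v.val + t + ((n - k) + (k - t)) = v.val + n by omega,
        Nat.add_mod_right, Nat.mod_eq_of_lt v.isLt]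

lemma succ_le_of_eq_mul {n d m : ℕ} (hm : n = (d + 1) * m) (hn : 0 < n) : d + 1 ≤ n :=
  hm ▸ Nat.le_mul_of_pos_right _ (Nat.pos_of_mul_pos_left (hm ▸ hn))

lemma add_mod_div_eq_or {n d m w s : ℕ} (hm : n = (d + 1) * m) (hw : w < n) (hs : s ≤ d) :
    (w + s) % n / (d + 1) = w / (d + 1) ∨ (w + s) % n / (d + 1) = (w / (d + 1) + 1) % m := by
  have hd : 0 < d + 1 := d.succ_pos
  by_cases hwrap : w + s < n
  · rw [Nat.mod_eq_of_lt hwrap]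
    have hlo : w / (d + 1) ≤ (w + s) / (d + 1) := Nat.div_le_div_right (by omega)
    have hhi : (w + s) / (d + 1) ≤ w / (d + 1) + 1 := by
      rw [← Nat.add_div_right w hd]; exact Nat.div_le_div_right (by omega)
    have hlt : (w + s) / (d + 1) < m := Nat.div_lt_of_lt_mul (hm ▸ hwrap)
    rcases Nat.eq_or_lt_of_le hhi with h | h
    · right; rw [h, Nat.mod_eq_of_lt (h ▸ hlt)]
    · left; omega
  · have hm1 : 1 ≤ m := Nat.pos_of_ne_zero (by rintro rfl; omega)
    have hq : w / (d + 1) = m - 1 := by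
      have hlt : w / (d + 1) < m := Nat.div_lt_of_lt_mul (hm ▸ hw)
      have hge : m - 1 ≤ w / (d + 1) := by
        rw [Nat.le_div_iff_mul_le hd, Nat.sub_one_mul]
        rw [mul_comm] at hm
        omega
      omega
    have hdn : d + 1 ≤ n := succ_le_of_eq_mul hm (by omega)
    right
    rw [Nat.mod_eq_sub_mod (by omega), Nat.mod_eq_of_lt (by omega), Nat.div_eq_of_lt (by omega),
      hq, Nat.sub_add_cancel hm1, Nat.mod_self]

lemma natCast_eq_block_add {n d m B v : ℕ} (hm : n = (d + 1) * m)
    (hv : v / (d + 1) = B ∨ v / (d + 1) = (B + 1) % m) :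
    ∃ r < 2 * (d + 1), (v : ZMod n) = ((d + 1) * B + r : ℕ) := by
  have hv' := Nat.div_add_mod v (d + 1)
  have hr := Nat.mod_lt v (by omega : 0 < d + 1)
  rcases hv with hB | hB
  · exact ⟨v % (d + 1), by omega, by rw [← hB, hv']⟩
  · refine ⟨d + 1 + v % (d + 1), by omega, ?_⟩
    have hwrap : (d + 1) * (B + 1) = (d + 1) * ((B + 1) % m) + n * ((B + 1) / m) := by
      rw [hm, mul_assoc, ← mul_add, Nat.mod_add_div]
    have hcast := congrArg (Nat.cast : ℕ → ZMod n) hwrap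
    push_cast [ZMod.natCast_self] at hcast
    calc (v : ZMod n) = ((d + 1) * (v / (d + 1)) + v % (d + 1) : ℕ) := by rw [hv']
      _ = _ := by
        rw [hB]
        push_cast
        linear_combination -hcast

section CyclePower

variable {n k d m : ℕ} {cm : Fin n → Fin m}

-- `(i + (n - k)) % n` is the vertex `i - k`, the left end of the closed neighbourhood of `i`.
lemma closedNbhdClusters_cycPow_val (hd : d = 2 * k) (hm : n = (d + 1) * m)
    (hcm : ∀ v : Fin n, (cm v).val = v.val / (d + 1)) {i : Fin n} {j : Fin m}
    (hj : j ∈ closedNbhdClusters (cycPow n k) cm i) :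
    j.val = (i.val + (n - k)) % n / (d + 1) ∨
      j.val = ((i.val + (n - k)) % n / (d + 1) + 1) % m := by
  obtain ⟨v, hv, rfl⟩ := Finset.mem_image.mp hj
  obtain ⟨s, hs, hvs⟩ := cycPow_closedNbhd_val (by have := succ_le_of_eq_mul hm i.pos; omega) hv
  rw [hcm, hvs]
  exact add_mod_div_eq_or hm (Nat.mod_lt _ i.pos) (hd ▸ hs)

lemma card_closedNbhdClusters_cycPow_le_two (hd : d = 2 * k) (hm : n = (d + 1) * m)
    (hcm : ∀ v : Fin n, (cm v).val = v.val / (d + 1)) (i : Fin n) :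
    #(closedNbhdClusters (cycPow n k) cm i) ≤ 2 := by
  refine (Finset.card_le_card_of_injOn Fin.val
    (t := {(i.val + (n - k)) % n / (d + 1), ((i.val + (n - k)) % n / (d + 1) + 1) % m})
    (fun j hj => ?_) Fin.val_injective.injOn).trans Finset.card_le_two
  simpa using closedNbhdClusters_cycPow_val hd hm hcm hj

lemma ncard_not_disjoint_closedNbhdClusters_cycPow_le (hd : d = 2 * k) (hm : n = (d + 1) * m)
    (hcm : ∀ v : Fin n, (cm v).val = v.val / (d + 1)) (i : Fin n) :
    {i' | ¬Disjoint (closedNbhdClusters (cycPow n k) cm i)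
      (closedNbhdClusters (cycPow n k) cm i')}.ncard ≤ 3 * d + 2 := by
  have hkn : k ≤ n := by have := succ_le_of_eq_mul hm i.pos; omega
  set B := (i.val + (n - k)) % n / (d + 1)
  set T := (Finset.range (3 * d + 2)).image fun r => ((d + 1) * B + (n - k) + r) % n
  have hT : #T ≤ 3 * d + 2 := Finset.card_image_le.trans (Finset.card_range _).le
  refine (Set.ncard_le_ncard_of_injOn Fin.val (t := T) (fun i' hi' => ?_)
    Fin.val_injective.injOn).trans (by rwa [Set.ncard_coe_finset])
  obtain ⟨j, hj, hj'⟩ := Finset.not_disjoint_iff.mp hi'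
  obtain ⟨v', hv', rfl⟩ := Finset.mem_image.mp hj'
  obtain ⟨r, hr, hv'r⟩ := natCast_eq_block_add hm
    (by rw [← hcm]; exact closedNbhdClusters_cycPow_val hd hm hcm hj)
  obtain ⟨s, hs, hv's⟩ := cycPow_closedNbhd_val hkn hv'
  refine Finset.mem_image.mpr ⟨r + (2 * k - s), Finset.mem_range.mpr (by omega), ?_⟩
  -- `i' ≡ v' + k - s ≡ (d + 1) B + r + k - s ≡ (d + 1) B - k + (r + 2k - s)`
  have hcast : ((i' : ℕ) : ZMod n) = ((d + 1) * B + (n - k) + (r + (2 * k - s)) : ℕ) := by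
    have h := congrArg (Nat.cast : ℕ → ZMod n) hv's
    rw [ZMod.natCast_mod, Nat.cast_add, ZMod.natCast_mod] at h
    push_cast [Nat.cast_sub hkn, Nat.cast_sub hs, ZMod.natCast_self] at h hv'r ⊢
    linear_combination hv'r - h
  rw [← (ZMod.natCast_eq_natCast_iff' _ _ n).mp hcast, Nat.mod_eq_of_lt i'.isLt]

end CyclePower

theorem statement11_general (n k d : ℕ) (hd : d = 2 * k)
    (m : ℕ) (hm : n = (d + 1) * m)
    (p : ℝ) (hp : p ∈ Set.Ioo (0:ℝ) 1)
    (cm : Fin n → Fin m) (hcm : ∀ v : Fin n, (cm v).val = v.val / (d + 1))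
    (YM : ℝ) (Y1 : Fin n → ℝ) (hY1 : ∀ i, Y1 i ∈ Set.Icc (0:ℝ) YM) :
    clusterVar p cm
        (fullExp (cycPow n k) true) (fullExp (cycPow n k) false)
        (fun i z => Y1 i * (if z ∈ fullExp (cycPow n k) true i then 1 else 0))
      ≤ YM ^ 2 * ((p ^ 2)⁻¹ - 1) * (3 * (d : ℝ) + 2) / (n : ℝ) := by
  have h := clusterVar_treatmentOnly_le hp.1 hp.2.le cm (fullExp (cycPow n k) true)
    (fullExp (cycPow n k) false) (closedNbhdClusters (cycPow n k) cm)
    (comp_mem_fullExp_true_iff _ cm) (disjoint_fullExp_false_true _)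
    (card_closedNbhdClusters_cycPow_le_two hd hm hcm)
    (ncard_not_disjoint_closedNbhdClusters_cycPow_le hd hm hcm) Y1 hY1
  simpa using h

/-- **Linear variance bound on powers of the cycle.**
Let `G` be the `k`-th power of the cycle on `n` vertices, which is `d`-regular with
`d = 2k`.  Suppose `d+1` divides `n` (say `n = (d+1)·m`), `n ≥ 3(d+1)`, and the
vertices are partitioned into contiguous blocks of `d+1` consecutive vertices
(the cluster map `cm` sends `v` to block `⌊v/(d+1)⌋`).  Under cluster
randomization with parameter `p ∈ (0,1)`, full neighborhood exposure, and
responses `Y i z = Y₁ i · 1[z ∈ σ¹_i]` with `0 ≤ Y₁ i ≤ Y_M` (control responses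
zero), the variance of the Horvitz–Thompson estimator is at most
`Y_M²·(p⁻² − 1)·(3d+2)/n`. -/
theorem statement11 (n k d : ℕ) (hd : d = 2 * k)
    (m : ℕ) (hm : n = (d + 1) * m) (hn : 3 * (d + 1) ≤ n)
    (p : ℝ) (hp : p ∈ Set.Ioo (0:ℝ) 1)
    (cm : Fin n → Fin m) (hcm : ∀ v : Fin n, (cm v).val = v.val / (d + 1))
    (YM : ℝ) (Y1 : Fin n → ℝ) (hY1 : ∀ i, Y1 i ∈ Set.Icc (0:ℝ) YM) :
    clusterVar p cm
        (fullExp (cycPow n k) true) (fullExp (cycPow n k) false)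
        (fun i z => Y1 i * (if z ∈ fullExp (cycPow n k) true i then 1 else 0))
      ≤ YM ^ 2 * ((p ^ 2)⁻¹ - 1) * (3 * (d : ℝ) + 2) / (n : ℝ) :=
  statement11_general n k d hd m hm p hp cm hcm YM Y1 hY1
end
end

section
/- Let G be a connected d-regular restricted-growth graph with growth constant κ, and consider any 3-net clustering of G. Then for every vertex w, the ball B_1(w) has non-empty intersection with at most κ³ distinct clusters. -/
open Finset
open scoped Classical

/-- The ball of radius `r` around `v`: vertices reachable from `v` within
graph distance `r`. -/
noncomputable def gball {V : Type*} [Fintype V] (G : SimpleGraph V) (v : V) (r : ℕ) :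
    Finset V :=
  Finset.univ.filter (fun u => G.Reachable v u ∧ G.dist v u ≤ r)

lemma gball_one_card {V : Type*} [Fintype V] (G : SimpleGraph V) [DecidableRel G.Adj] (x : V) :
    (gball G x 1).card = G.degree x + 1 := by
  have h : gball G x 1 = insert x (G.neighborFinset x) := by
    ext u
    simp only [gball, Finset.mem_filter, Finset.mem_univ, true_and, Finset.mem_insert,
      SimpleGraph.mem_neighborFinset]
    constructor
    · rintro ⟨hr, hd⟩
      interval_cases h : G.dist x u
      · left; exact (hr.dist_eq_zero_iff.mp h).symm ▸ rfl
      · right; exact SimpleGraph.dist_eq_one_iff_adj.mp h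
    · rintro (rfl | hadj)
      · refine ⟨SimpleGraph.Reachable.refl _, ?_⟩
        rw [SimpleGraph.dist_self]; omega
      · exact ⟨hadj.reachable, by rw [SimpleGraph.dist_eq_one_iff_adj.mpr hadj]⟩
  rw [h, Finset.card_insert_of_notMem (by simp), SimpleGraph.card_neighborFinset_eq_degree]


/-- **Neighborhoods meet few clusters in 3-net clusterings.**
Let `G` be a connected `d`-regular restricted-growth graph with growth constant
`κ`, and take any 3-net clustering of `G` (centers `v 1, …, v k` pairwise at
distance at least `3` covering every vertex within distance `2`, each vertex
assigned by `a` to a nearest center).  Then for every vertex `w`, the ball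
`B_1(w)` meets at most `κ³` distinct clusters. -/
theorem statement14 {V : Type*} [Fintype V] (G : SimpleGraph V)
    (hconn : G.Connected) (d : ℕ) (hreg : ∀ v, G.degree v = d)
    (κ : ℝ) (hκ : 1 ≤ κ)
    (hgrow : ∀ (v : V) (r : ℕ), 1 ≤ r →
      ((gball G v (r + 1)).card : ℝ) ≤ κ * ((gball G v r).card : ℝ))
    {k : ℕ} (v : Fin k → V) (a : V → Fin k)
    (hsep : ∀ i j : Fin k, i ≠ j → 3 ≤ G.dist (v i) (v j))
    (hcov : ∀ w : V, ∃ j, G.dist (v j) w ≤ 2)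
    (hnear : ∀ (w : V) (j : Fin k), G.dist (v (a w)) w ≤ G.dist (v j) w) :
    ∀ w : V, (((gball G w 1).image a).card : ℝ) ≤ κ ^ 3 := by
  intro w
  set S : Finset (Fin k) := (gball G w 1).image a with hS
  -- every center of a cluster meeting B_1(w) is within distance 3 of w
  have hdist3 : ∀ i ∈ S, G.dist w (v i) ≤ 3 := by
    intro i hi
    rw [hS, Finset.mem_image] at hi
    obtain ⟨u, hu, rfl⟩ := hi
    simp only [gball, Finset.mem_filter] at hu
    obtain ⟨j, hj⟩ := hcov u
    have h1 : G.dist (v (a u)) u ≤ 2 := le_trans (hnear u j) hj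
    calc G.dist w (v (a u)) ≤ G.dist w u + G.dist u (v (a u)) := hconn.dist_triangle
      _ = G.dist w u + G.dist (v (a u)) u := by congr 1; exact SimpleGraph.dist_comm
      _ ≤ 1 + 2 := add_le_add hu.2.2 h1
  -- the unit balls around these centers are inside B_4(w)
  have hsub : S.biUnion (fun i => gball G (v i) 1) ⊆ gball G w 4 := by
    intro x hx
    rw [Finset.mem_biUnion] at hx
    obtain ⟨i, hi, hxi⟩ := hx
    simp only [gball, Finset.mem_filter, Finset.mem_univ, true_and] at hxi ⊢
    refine ⟨hconn.preconnected w x, ?_⟩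
    calc G.dist w x ≤ G.dist w (v i) + G.dist (v i) x := hconn.dist_triangle
      _ ≤ 3 + 1 := add_le_add (hdist3 i hi) hxi.2
  -- and they are pairwise disjoint
  have hdisj : ∀ i ∈ S, ∀ j ∈ S, i ≠ j →
      Disjoint (gball G (v i) 1) (gball G (v j) 1) := by
    intro i _ j _ hij
    rw [Finset.disjoint_left]
    intro x hxi hxj
    simp only [gball, Finset.mem_filter] at hxi hxj
    have : G.dist (v i) (v j) ≤ 2 := by
      calc G.dist (v i) (v j) ≤ G.dist (v i) x + G.dist x (v j) := hconn.dist_triangle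
        _ = G.dist (v i) x + G.dist (v j) x := by congr 1; exact SimpleGraph.dist_comm
        _ ≤ 1 + 1 := add_le_add hxi.2.2 hxj.2.2
    have := hsep i j hij
    omega
  have hcard1 : ∀ x : V, (gball G x 1).card = d + 1 := fun x => by
    rw [gball_one_card, hreg]
  -- counting
  have hcount : S.card * (d + 1) ≤ (gball G w 4).card := by
    calc S.card * (d + 1) = ∑ i ∈ S, (gball G (v i) 1).card := by
          rw [Finset.sum_congr rfl (fun i _ => hcard1 (v i)), Finset.sum_const, smul_eq_mul]
      _ = (S.biUnion (fun i => gball G (v i) 1)).card := (Finset.card_biUnion hdisj).symm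
      _ ≤ (gball G w 4).card := Finset.card_le_card hsub
  -- growth chain
  have hpos : (0:ℝ) < (d:ℝ) + 1 := by positivity
  have hκ0 : (0:ℝ) ≤ κ := le_trans zero_le_one hκ
  have g3 := hgrow w 3 (by norm_num)
  have g2 := hgrow w 2 (by norm_num)
  have g1 := hgrow w 1 (by norm_num)
  have hchain : ((gball G w 4).card : ℝ) ≤ κ ^ 3 * ((d:ℝ) + 1) := by
    have h1 : ((gball G w 1).card : ℝ) = (d:ℝ) + 1 := by rw [hcard1 w]; push_cast; ring
    calc ((gball G w 4).card : ℝ) = ((gball G w (3+1)).card : ℝ) := by norm_num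
      _ ≤ κ * ((gball G w 3).card : ℝ) := g3
      _ ≤ κ * (κ * ((gball G w 2).card : ℝ)) := by
          exact mul_le_mul_of_nonneg_left g2 hκ0
      _ ≤ κ * (κ * (κ * ((gball G w 1).card : ℝ))) := by
          exact mul_le_mul_of_nonneg_left (mul_le_mul_of_nonneg_left g1 hκ0) hκ0
      _ = κ ^ 3 * ((d:ℝ) + 1) := by rw [h1]; ring
  have : (S.card : ℝ) * ((d:ℝ) + 1) ≤ κ ^ 3 * ((d:ℝ) + 1) := by
    calc (S.card : ℝ) * ((d:ℝ) + 1) = ((S.card * (d+1) : ℕ) : ℝ) := by push_cast; ring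
      _ ≤ ((gball G w 4).card : ℝ) := by exact_mod_cast hcount
      _ ≤ κ ^ 3 * ((d:ℝ) + 1) := hchain
  exact le_of_mul_le_mul_right this hpos
end

section
/- Let G be a d-regular graph on n vertices and let the assignment Z be i.i.d. vertex randomization: each vertex is independently treated with probability p ∈ (0,1). Use full neighborhood exposure, and suppose the response functions are constant on each exposure event with values Y_i(σ^1_i), Y_i(σ^0_i) ∈ [Y_m, Y_M] where 0 < Y_m. Then the Horvitz–Thompson estimator satisfies Var[τ̂(Z)] ≥ (Y_m²/n)·( p^{−(d+1)} + (1−p)^{−(d+1)} − 2 ). -/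
/-!
Write `n τ̂ = ∑ᵢ tᵢ` with `tᵢ = Y1ᵢ 1[Nᵢ ≡ 1] / p^|Nᵢ| - Y0ᵢ 1[Nᵢ ≡ 0] / (1-p)^|Nᵢ|`, where `Nᵢ` is the
closed neighbourhood of `i`, so that `Var τ̂ = n⁻² ∑ᵢ ∑ⱼ Cov(tᵢ, tⱼ)`. Every covariance is
nonnegative: `Pr(Nᵢ ∪ Nⱼ ≡ b) ≥ Pr(Nᵢ ≡ b) Pr(Nⱼ ≡ b)`, while the mixed event `Nᵢ ≡ 1, Nⱼ ≡ 0` is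
empty unless `Nᵢ, Nⱼ` are disjoint, and then it factorises. Dropping the off-diagonal terms leaves
`Var tᵢ = Y1ᵢ² (p^{-(d+1)} - 1) + Y0ᵢ² ((1-p)^{-(d+1)} - 1) + 2 Y1ᵢ Y0ᵢ`, which is at least
`Ym² (p^{-(d+1)} + (1-p)^{-(d+1)} - 2)` since the responses are at least `Ym > 0`.
-/

open Finset
open scoped Classical

noncomputable section

section Bernoulli

variable {V : Type*} [Fintype V] (p : ℝ)

def bernExp (f : (V → Bool) → ℝ) : ℝ :=
  ∑ x, coinWt p x * f x

theorem bernExp_prod (f : V → Bool → ℝ) :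
    bernExp p (fun x => ∏ v, f v (x v)) = ∏ v, (p * f v true + (1 - p) * f v false) := by
  simp only [bernExp, coinWt, ← Finset.prod_mul_distrib]
  rw [← Fintype.prod_sum fun v t => (if t then p else 1 - p) * f v t]
  simp

theorem prod_ite_mem_eq_pow_card {M : Type*} [CommMonoid M] (S : Finset V) (r : M) :
    ∏ v, (if v ∈ S then r else 1) = r ^ S.card := by
  rw [Fintype.prod_ite_mem, Finset.prod_const]

def allEqInd (S : Finset V) (b : Bool) (x : V → Bool) : ℝ :=
  if ∀ v ∈ S, x v = b then 1 else 0

theorem allEqInd_eq_prod (S : Finset V) (b : Bool) :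
    allEqInd S b = fun x => ∏ v, if v ∈ S then (if x v = b then 1 else 0) else 1 := by
  ext x
  rw [Fintype.prod_ite_mem, Finset.prod_boole, allEqInd]
  congr

theorem allEqInd_mul_allEqInd (S T : Finset V) (b : Bool) (x : V → Bool) :
    allEqInd S b x * allEqInd T b x = allEqInd (S ∪ T) b x := by
  simp only [allEqInd, Finset.forall_mem_union]
  split_ifs <;> simp_all

theorem bernExp_allEqInd (S : Finset V) (b : Bool) :
    bernExp p (allEqInd S b) = (if b then p else 1 - p) ^ S.card := by
  rw [allEqInd_eq_prod, bernExp_prod p fun v t => if v ∈ S then (if t = b then 1 else 0) else 1,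
    ← prod_ite_mem_eq_pow_card]
  refine Finset.prod_congr rfl fun v _ => ?_
  by_cases hS : v ∈ S <;> cases b <;> simp [hS]

theorem bernExp_allEqInd_true_mul_false (S T : Finset V) :
    bernExp p (fun x => allEqInd S true x * allEqInd T false x)
      = if Disjoint S T then p ^ S.card * (1 - p) ^ T.card else 0 := by
  simp only [allEqInd_eq_prod, ← Finset.prod_mul_distrib]
  rw [bernExp_prod p fun v t => (if v ∈ S then (if t = true then 1 else 0) else 1) *
    (if v ∈ T then (if t = false then 1 else 0) else 1)]
  by_cases hST : Disjoint S T
  · rw [if_pos hST, ← prod_ite_mem_eq_pow_card S, ← prod_ite_mem_eq_pow_card T,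
      ← Finset.prod_mul_distrib]
    refine Finset.prod_congr rfl fun v _ => ?_
    by_cases hS : v ∈ S <;> by_cases hT : v ∈ T
    · exact absurd (hST.forall_ne_finset hS hT rfl) (by simp)
    all_goals simp [hS, hT]
  · obtain ⟨v, hS, hT⟩ := Finset.not_disjoint_iff.mp hST
    rw [if_neg hST]
    exact Finset.prod_eq_zero (Finset.mem_univ v) (by simp [hS, hT])

theorem bernExp_sub (f g : (V → Bool) → ℝ) :
    bernExp p (fun x => f x - g x) = bernExp p f - bernExp p g := by
  simp only [bernExp, mul_sub, Finset.sum_sub_distrib]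

theorem bernExp_add (f g : (V → Bool) → ℝ) :
    bernExp p (fun x => f x + g x) = bernExp p f + bernExp p g := by
  simp only [bernExp, mul_add, Finset.sum_add_distrib]

theorem bernExp_const_mul (c : ℝ) (f : (V → Bool) → ℝ) :
    bernExp p (fun x => c * f x) = c * bernExp p f := by
  simp only [bernExp, Finset.mul_sum, mul_left_comm]

theorem bernExp_sum {ι : Type*} (s : Finset ι) (t : ι → (V → Bool) → ℝ) :
    bernExp p (fun x => ∑ i ∈ s, t i x) = ∑ i ∈ s, bernExp p (t i) := by
  simp only [bernExp, Finset.mul_sum]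
  exact Finset.sum_comm

def bernCov (f g : (V → Bool) → ℝ) : ℝ :=
  bernExp p (fun x => f x * g x) - bernExp p f * bernExp p g

theorem bernCov_const_mul_sum {ι : Type*} [Fintype ι] (c : ℝ) (t : ι → (V → Bool) → ℝ) :
    bernCov p (fun x => c * ∑ i, t i x) (fun x => c * ∑ i, t i x)
      = c ^ 2 * ∑ i, ∑ j, bernCov p (t i) (t j) := by
  have hprod : ∀ x, (c * ∑ i, t i x) * (c * ∑ i, t i x) = c ^ 2 * ∑ i, ∑ j, t i x * t j x := by
    intro x
    rw [← Finset.sum_mul_sum]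
    ring
  simp only [bernCov, hprod, bernExp_const_mul, bernExp_sum, Finset.sum_sub_distrib]
  rw [mul_mul_mul_comm, Finset.sum_mul_sum]
  ring

end Bernoulli

theorem one_le_pow_card_union_div {α : Type*} {r : ℝ} (hr0 : 0 < r) (hr1 : r ≤ 1)
    (S T : Finset α) : 1 ≤ r ^ (S ∪ T).card / (r ^ S.card * r ^ T.card) := by
  rw [one_le_div₀ (by positivity), ← pow_add]
  exact pow_le_pow_of_le_one hr0.le hr1 (Finset.card_union_le S T)

section HTTerm

variable {V : Type*} [Fintype V] {p : ℝ}

def htTerm (p : ℝ) (S : Finset V) (a b : ℝ) (x : V → Bool) : ℝ :=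
  a / p ^ S.card * allEqInd S true x - b / (1 - p) ^ S.card * allEqInd S false x

theorem bernExp_htTerm (hp : p ≠ 0) (hq : 1 - p ≠ 0) (S : Finset V) (a b : ℝ) :
    bernExp p (htTerm p S a b) = a - b := by
  unfold htTerm
  rw [bernExp_sub, bernExp_const_mul, bernExp_const_mul, bernExp_allEqInd, bernExp_allEqInd]
  simp [hp, hq]

theorem bernCov_htTerm (hp : p ≠ 0) (hq : 1 - p ≠ 0) (S T : Finset V) (a b c e : ℝ) :
    bernCov p (htTerm p S a b) (htTerm p T c e)
      = a * c * (p ^ (S ∪ T).card / (p ^ S.card * p ^ T.card) - 1)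
        + b * e * ((1 - p) ^ (S ∪ T).card / ((1 - p) ^ S.card * (1 - p) ^ T.card) - 1)
        + (a * e + b * c) * (if Disjoint S T then 0 else 1) := by
  have hexpand : ∀ x, htTerm p S a b x * htTerm p T c e x
      = a / p ^ S.card * (c / p ^ T.card) * allEqInd (S ∪ T) true x
        + b / (1 - p) ^ S.card * (e / (1 - p) ^ T.card) * allEqInd (S ∪ T) false x
        - (a / p ^ S.card * (e / (1 - p) ^ T.card) * (allEqInd S true x * allEqInd T false x)
          + c / p ^ T.card * (b / (1 - p) ^ S.card) * (allEqInd T true x * allEqInd S false x)) := by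
    intro x
    simp only [htTerm, ← allEqInd_mul_allEqInd]
    ring
  simp only [bernCov, hexpand, bernExp_sub, bernExp_add, bernExp_const_mul, bernExp_allEqInd,
    bernExp_allEqInd_true_mul_false, bernExp_htTerm hp hq, disjoint_comm (a := T),
    Bool.false_eq_true, ↓reduceIte]
  split_ifs <;> field_simp <;> ring

theorem bernCov_htTerm_nonneg (hp : p ∈ Set.Ioo 0 1) (S T : Finset V) {a b c e : ℝ}
    (ha : 0 ≤ a) (hb : 0 ≤ b) (hc : 0 ≤ c) (he : 0 ≤ e) :
    0 ≤ bernCov p (htTerm p S a b) (htTerm p T c e) := by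
  obtain ⟨hp0, hp1⟩ := hp
  rw [bernCov_htTerm hp0.ne' (sub_pos.2 hp1).ne']
  have h1 := one_le_pow_card_union_div hp0 hp1.le S T
  have h0 := one_le_pow_card_union_div (sub_pos.2 hp1) (sub_le_self 1 hp0.le) S T
  have hdisj : (0 : ℝ) ≤ if Disjoint S T then 0 else 1 := by split_ifs <;> norm_num
  have := mul_nonneg (mul_nonneg ha hc) (sub_nonneg.2 h1)
  have := mul_nonneg (mul_nonneg hb he) (sub_nonneg.2 h0)
  have := mul_nonneg (add_nonneg (mul_nonneg ha he) (mul_nonneg hb hc)) hdisj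
  linarith

theorem bernCov_htTerm_self (hp : p ≠ 0) (hq : 1 - p ≠ 0) {S : Finset V} (hS : S.Nonempty)
    (a b : ℝ) :
    bernCov p (htTerm p S a b) (htTerm p S a b)
      = a ^ 2 * ((p ^ S.card)⁻¹ - 1) + b ^ 2 * (((1 - p) ^ S.card)⁻¹ - 1) + 2 * (a * b) := by
  rw [bernCov_htTerm hp hq, Finset.union_self, if_neg (by simpa using hS.ne_empty)]
  field_simp
  ring

theorem sq_mul_le_bernCov_htTerm_self (hp : p ∈ Set.Ioo 0 1) {S : Finset V} (hS : S.Nonempty)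
    {m a b : ℝ} (hm : 0 ≤ m) (ha : m ≤ a) (hb : m ≤ b) :
    m ^ 2 * ((p ^ S.card)⁻¹ + ((1 - p) ^ S.card)⁻¹ - 2)
      ≤ bernCov p (htTerm p S a b) (htTerm p S a b) := by
  obtain ⟨hp0, hp1⟩ := hp
  have hq0 : 0 < 1 - p := sub_pos.2 hp1
  rw [bernCov_htTerm_self hp0.ne' hq0.ne' hS]
  have h1 : 0 ≤ (p ^ S.card)⁻¹ - 1 :=
    sub_nonneg.2 ((one_le_inv₀ (by positivity)).2 (pow_le_one₀ hp0.le hp1.le))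
  have h0 : 0 ≤ ((1 - p) ^ S.card)⁻¹ - 1 :=
    sub_nonneg.2 ((one_le_inv₀ (by positivity)).2 (pow_le_one₀ hq0.le (sub_le_self 1 hp0.le)))
  have := mul_le_mul_of_nonneg_right (pow_le_pow_left₀ hm ha 2) h1
  have := mul_le_mul_of_nonneg_right (pow_le_pow_left₀ hm hb 2) h0
  have := mul_nonneg (hm.trans ha) (hm.trans hb)
  linarith

end HTTerm

section Graph

variable {V : Type*} [Fintype V] (G : SimpleGraph V)

def closedNbhd (v : V) : Finset V :=
  insert v (G.neighborFinset v)

theorem card_closedNbhd (v : V) : (closedNbhd G v).card = G.degree v + 1 := by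
  rw [closedNbhd, Finset.card_insert_of_notMem (G.notMem_neighborFinset_self v),
    G.card_neighborFinset_eq_degree]

theorem closedNbhd_nonempty (v : V) : (closedNbhd G v).Nonempty :=
  Finset.insert_nonempty v _

theorem ite_mem_fullExp {b : Bool} {v : V} {f : (V → Bool) → ℝ} {y : ℝ}
    (hf : ∀ z ∈ fullExp G b v, f z = y) (x : V → Bool) :
    (if x ∈ fullExp G b v then f x else 0) = y * allEqInd (closedNbhd G v) b x := by
  have hmem : x ∈ fullExp G b v ↔ ∀ u ∈ closedNbhd G v, x u = b := by
    simp [fullExp, closedNbhd]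
  by_cases hx : x ∈ fullExp G b v
  · rw [if_pos hx, hf x hx, allEqInd, if_pos (hmem.1 hx), mul_one]
  · rw [if_neg hx, allEqInd, if_neg (mt hmem.2 hx), mul_zero]

theorem clusterPr_id_fullExp (p : ℝ) (b : Bool) (v : V) :
    clusterPr p id (fullExp G b v) = (if b then p else 1 - p) ^ (closedNbhd G v).card := by
  rw [← bernExp_allEqInd]
  refine Finset.sum_congr rfl fun x _ => ?_
  rw [← one_mul (allEqInd _ _ x), ← ite_mem_fullExp G (f := fun _ => 1) (fun _ _ => rfl)]
  rfl

end Graph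

theorem clusterVar_id_eq_bernCov {V : Type*} [Fintype V] (p : ℝ) (σ1 σ0 : V → Set (V → Bool))
    (Y : V → (V → Bool) → ℝ) :
    clusterVar p id σ1 σ0 Y
      = bernCov p (htEst (clusterPr p id) σ1 σ0 Y) (htEst (clusterPr p id) σ1 σ0 Y) := by
  simp only [clusterVar, bernCov, bernExp, sq]
  rfl

theorem htEst_fullExp {V : Type*} [Fintype V] (G : SimpleGraph V) (p : ℝ)
    {Y : V → (V → Bool) → ℝ} {Y1 Y0 : V → ℝ}
    (hc1 : ∀ i, ∀ z ∈ fullExp G true i, Y i z = Y1 i)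
    (hc0 : ∀ i, ∀ z ∈ fullExp G false i, Y i z = Y0 i) :
    htEst (clusterPr p id) (fullExp G true) (fullExp G false) Y
      = fun x => (Fintype.card V : ℝ)⁻¹ * ∑ i, htTerm p (closedNbhd G i) (Y1 i) (Y0 i) x := by
  ext x
  refine congrArg _ (Finset.sum_congr rfl fun i _ => ?_)
  rw [ite_mem_fullExp G (hc1 i), ite_mem_fullExp G (hc0 i), clusterPr_id_fullExp,
    clusterPr_id_fullExp, htTerm]
  simp only [↓reduceIte, Bool.false_eq_true]
  ring

/-- **Exponential variance lower bound under i.i.d. vertex randomization,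
regular case.**  Let `G` be `d`-regular on `n` vertices, let each vertex be
independently treated with probability `p ∈ (0,1)` (cluster randomization with
the identity cluster map), use full neighborhood exposure, and let the responses
be constant on each exposure event with values in `[Y_m, Y_M]`, `Y_m > 0`.  Then
`Var[τ̂] ≥ (Y_m²/n)·(p^{−(d+1)} + (1−p)^{−(d+1)} − 2)`. -/
theorem statement17 {V : Type*} [Fintype V] (G : SimpleGraph V)
    (d : ℕ) (hreg : ∀ v, G.degree v = d)
    (p : ℝ) (hp : p ∈ Set.Ioo (0:ℝ) 1)
    (Ym YM : ℝ) (hYm : 0 < Ym)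
    (Y : V → (V → Bool) → ℝ) (Y1 Y0 : V → ℝ)
    (hY1 : ∀ i, Y1 i ∈ Set.Icc Ym YM) (hY0 : ∀ i, Y0 i ∈ Set.Icc Ym YM)
    (hc1 : ∀ i, ∀ z ∈ fullExp G true i, Y i z = Y1 i)
    (hc0 : ∀ i, ∀ z ∈ fullExp G false i, Y i z = Y0 i) :
    Ym ^ 2 / (Fintype.card V : ℝ) *
        ((p ^ (d + 1))⁻¹ + ((1 - p) ^ (d + 1))⁻¹ - 2)
      ≤ clusterVar p (id : V → V) (fullExp G true) (fullExp G false) Y := by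
  set n : ℝ := (Fintype.card V : ℝ)
  set t := fun i => htTerm p (closedNbhd G i) (Y1 i) (Y0 i)
  set D := Ym ^ 2 * ((p ^ (d + 1))⁻¹ + ((1 - p) ^ (d + 1))⁻¹ - 2) with hD
  have hdiag : ∀ i, D ≤ bernCov p (t i) (t i) := fun i => by
    simpa only [card_closedNbhd, hreg] using sq_mul_le_bernCov_htTerm_self hp
      (closedNbhd_nonempty G i) hYm.le (hY1 i).1 (hY0 i).1
  have hcov : ∀ i j, 0 ≤ bernCov p (t i) (t j) := fun i j =>
    bernCov_htTerm_nonneg hp _ _ (hYm.le.trans (hY1 i).1) (hYm.le.trans (hY0 i).1)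
      (hYm.le.trans (hY1 j).1) (hYm.le.trans (hY0 j).1)
  rw [clusterVar_id_eq_bernCov, htEst_fullExp G p hc1 hc0, bernCov_const_mul_sum]
  calc Ym ^ 2 / n * ((p ^ (d + 1))⁻¹ + ((1 - p) ^ (d + 1))⁻¹ - 2) = n⁻¹ ^ 2 * (n * D) := by
        by_cases hn : n = 0
        · simp [hn]
        · rw [hD]; field_simp
    _ = n⁻¹ ^ 2 * ∑ _i : V, D := by rw [Finset.sum_const, Finset.card_univ, nsmul_eq_mul]
    _ ≤ n⁻¹ ^ 2 * ∑ i, bernCov p (t i) (t i) := by gcongr with i; exact hdiag i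
    _ ≤ n⁻¹ ^ 2 * ∑ i, ∑ j, bernCov p (t i) (t j) := by
        gcongr with i
        exact Finset.single_le_sum (fun j _ => hcov i j) (Finset.mem_univ i)

end
end
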